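/- arXiv:1901.01840 — 4 statements merged into one kernel-verified Lean document; each statement's English description precedes it below -/
import Mathlib

section
/- Let p and q be real numbers with p > 0, q > 0 and p ≠ q, let n be a natural number, and let u, v be real numbers. Then the (p,q)-deformed Vandermonde formula holds: [u+v]_{n,p,q} = Σ_{κ=0}^{n} C_{p,q}(n,κ) · p^{κ(v−n+κ)} · q^{(n−κ)(u−κ)} · [u]_{κ,p,q} · [v]_{n−κ,p,q}. -/
/-- The (p,q)-deformed number `[x]_{p,q} = (p^x - q^x)/(p - q)` (real powers). -/
noncomputable def pqNum (p q x : ℝ) : ℝ := (p ^ x - q ^ x) / (p - q)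

/-- The (p,q)-factorial `[n]_{p,q}! = ∏_{i=1}^n [i]_{p,q}`. -/
noncomputable def pqFac (p q : ℝ) (n : ℕ) : ℝ := ∏ i ∈ Finset.range n, pqNum p q ((i : ℝ) + 1)

/-- The j-th order (p,q)-factorial `[x]_{j,p,q} = ∏_{v=0}^{j-1} [x-v]_{p,q}`. -/
noncomputable def pqFacOrd (p q x : ℝ) (j : ℕ) : ℝ := ∏ v ∈ Finset.range j, pqNum p q (x - (v : ℝ))

/-- The (p,q)-binomial coefficient `C_{p,q}(n,κ)`. -/
noncomputable def pqBinom (p q : ℝ) (n k : ℕ) : ℝ := pqFac p q n / (pqFac p q k * pqFac p q (n - k))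

section Helpers

variable {p q : ℝ}

lemma pqNum_add (hp : 0 < p) (hq : 0 < q) (hpq : p ≠ q) (x y : ℝ) :
    pqNum p q (x + y) = p ^ y * pqNum p q x + q ^ x * pqNum p q y := by
  unfold pqNum
  rw [Real.rpow_add hp, Real.rpow_add hq]
  field_simp [sub_ne_zero.mpr hpq]
  ring

lemma pqNum_pos (hp : 0 < p) (hq : 0 < q) (hpq : p ≠ q) {x : ℝ} (hx : 0 < x) :
    0 < pqNum p q x := by
  unfold pqNum
  rcases lt_or_gt_of_ne hpq with h | h
  · apply div_pos_of_neg_of_neg <;> simp only [sub_neg]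
    · exact Real.rpow_lt_rpow hp.le h hx
    · exact h
  · apply div_pos <;> simp only [sub_pos]
    · exact Real.rpow_lt_rpow hq.le h hx
    · exact h

lemma pqFac_pos (hp : 0 < p) (hq : 0 < q) (hpq : p ≠ q) (n : ℕ) : 0 < pqFac p q n :=
  Finset.prod_pos fun i _ => pqNum_pos hp hq hpq (by positivity)

lemma pqFac_succ (n : ℕ) : pqFac p q (n + 1) = pqFac p q n * pqNum p q ((n : ℝ) + 1) :=
  Finset.prod_range_succ _ _

lemma pqFacOrd_succ (x : ℝ) (j : ℕ) :
    pqFacOrd p q x (j + 1) = pqFacOrd p q x j * pqNum p q (x - (j : ℝ)) :=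
  Finset.prod_range_succ _ _

lemma pqBinom_zero (hp : 0 < p) (hq : 0 < q) (hpq : p ≠ q) (n : ℕ) : pqBinom p q n 0 = 1 := by
  unfold pqBinom
  rw [show pqFac p q 0 = 1 from Finset.prod_range_zero _]
  simp [(pqFac_pos hp hq hpq n).ne', div_self]

lemma pqBinom_self (hp : 0 < p) (hq : 0 < q) (hpq : p ≠ q) (n : ℕ) : pqBinom p q n n = 1 := by
  unfold pqBinom
  rw [Nat.sub_self, show pqFac p q 0 = 1 from Finset.prod_range_zero _]
  simp [(pqFac_pos hp hq hpq n).ne', div_self]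

lemma pqPascal (hp : 0 < p) (hq : 0 < q) (hpq : p ≠ q) {n k : ℕ} (hk : k < n) :
    pqBinom p q (n + 1) (k + 1) =
      p ^ ((k : ℝ) + 1) * pqBinom p q n (k + 1) + q ^ ((n : ℝ) - (k : ℝ)) * pqBinom p q n k := by
  obtain ⟨m, rfl⟩ : ∃ m, n = k + m + 1 := ⟨n - k - 1, by omega⟩
  unfold pqBinom
  have h1 : k + m + 1 + 1 - (k + 1) = m + 1 := by omega
  have h2 : k + m + 1 - (k + 1) = m := by omega
  have h3 : k + m + 1 - k = m + 1 := by omega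
  rw [h1, h2, h3]
  have e1 : pqFac p q (k + m + 1 + 1)
      = pqFac p q (k + m + 1) * pqNum p q ((k : ℝ) + (m : ℝ) + 2) := by
    rw [pqFac_succ]; push_cast; ring_nf
  have e2 : pqFac p q (k + 1) = pqFac p q k * pqNum p q ((k : ℝ) + 1) := pqFac_succ _
  have e3 : pqFac p q (m + 1) = pqFac p q m * pqNum p q ((m : ℝ) + 1) := pqFac_succ _
  have e4 : pqNum p q ((k : ℝ) + (m : ℝ) + 2)
      = p ^ ((k : ℝ) + 1) * pqNum p q ((m : ℝ) + 1)
        + q ^ ((m : ℝ) + 1) * pqNum p q ((k : ℝ) + 1) := by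
    rw [show (k : ℝ) + (m : ℝ) + 2 = ((m : ℝ) + 1) + ((k : ℝ) + 1) by ring,
      pqNum_add hp hq hpq]
  rw [e1, e2, e3, e4]
  push_cast
  rw [show (k : ℝ) + (m : ℝ) + 1 - (k : ℝ) = (m : ℝ) + 1 by ring]
  have hfk := (pqFac_pos hp hq hpq k).ne'
  have hfm := (pqFac_pos hp hq hpq m).ne'
  have hfkm := (pqFac_pos hp hq hpq (k + m + 1)).ne'
  have hnk : pqNum p q ((k : ℝ) + 1) ≠ 0 := (pqNum_pos hp hq hpq (by positivity)).ne'
  have hnm : pqNum p q ((m : ℝ) + 1) ≠ 0 := (pqNum_pos hp hq hpq (by positivity)).ne'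
  field_simp

/-- The summand of the Vandermonde sum. -/
noncomputable def pqT (p q u v : ℝ) (n κ : ℕ) : ℝ :=
  pqBinom p q n κ * p ^ ((κ : ℝ) * (v - (n : ℝ) + (κ : ℝ)))
    * q ^ (((n : ℝ) - (κ : ℝ)) * (u - (κ : ℝ)))
    * pqFacOrd p q u κ * pqFacOrd p q v (n - κ)

lemma pqEdge0 (hp : 0 < p) (hq : 0 < q) (hpq : p ≠ q) (u v : ℝ) (n : ℕ) :
    pqT p q u v n 0 * (q ^ (u - ((0 : ℕ) : ℝ)) * pqNum p q (v - ((n : ℝ) - ((0 : ℕ) : ℝ))))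
      = pqT p q u v (n + 1) 0 := by
  simp only [pqT, Nat.cast_zero, sub_zero, Nat.sub_zero, zero_mul, Real.rpow_zero, mul_one,
    one_mul, pqBinom_zero hp hq hpq, pqFacOrd, Finset.prod_range_zero]
  rw [Finset.prod_range_succ, show ((n + 1 : ℕ) : ℝ) * u = (n : ℝ) * u + u by push_cast; ring,
    Real.rpow_add hq]
  ring

lemma pqEdgeTop (hp : 0 < p) (hq : 0 < q) (hpq : p ≠ q) (u v : ℝ) (n : ℕ) :
    pqT p q u v n n * (p ^ (v - ((n : ℝ) - (n : ℝ))) * pqNum p q (u - (n : ℝ)))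
      = pqT p q u v (n + 1) (n + 1) := by
  simp only [pqT, Nat.sub_self, sub_self, zero_mul, Real.rpow_zero, mul_one, one_mul,
    pqBinom_self hp hq hpq, pqFacOrd, Finset.prod_range_zero, sub_zero]
  rw [Finset.prod_range_succ,
    show ((n + 1 : ℕ) : ℝ) * (v - ((n + 1 : ℕ) : ℝ) + ((n + 1 : ℕ) : ℝ))
      = (n : ℝ) * (v - (n : ℝ) + (n : ℝ)) + v by push_cast; ring,
    Real.rpow_add hp]
  ring

lemma pqHeart (hp : 0 < p) (hq : 0 < q) (hpq : p ≠ q) (u v : ℝ) {n k : ℕ} (hk : k < n) :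
    pqT p q u v n k * (p ^ (v - ((n : ℝ) - (k : ℝ))) * pqNum p q (u - (k : ℝ)))
      + pqT p q u v n (k + 1)
        * (q ^ (u - ((k + 1 : ℕ) : ℝ)) * pqNum p q (v - ((n : ℝ) - ((k + 1 : ℕ) : ℝ))))
      = pqT p q u v (n + 1) (k + 1) := by
  have hk1 : k + 1 ≤ n := hk
  have hsub : n - k = (n - (k + 1)) + 1 := by omega
  have hsub2 : n + 1 - (k + 1) = (n - (k + 1)) + 1 := by omega
  have hcast : ((n - (k + 1) : ℕ) : ℝ) = (n : ℝ) - ((k + 1 : ℕ) : ℝ) := by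
    rw [Nat.cast_sub hk1]
  simp only [pqT, hsub, hsub2, pqFacOrd_succ, hcast]
  rw [pqPascal hp hq hpq hk]
  rw [show ((k + 1 : ℕ) : ℝ) * (v - ((n + 1 : ℕ) : ℝ) + ((k + 1 : ℕ) : ℝ))
        = (k : ℝ) * (v - (n : ℝ) + (k : ℝ)) + (v - ((n : ℝ) - (k : ℝ))) by push_cast; ring]
  rw [show ((k + 1 : ℕ) : ℝ) * (v - (n : ℝ) + ((k + 1 : ℕ) : ℝ))
        = ((k : ℝ) * (v - (n : ℝ) + (k : ℝ)) + (v - ((n : ℝ) - (k : ℝ)))) + ((k : ℝ) + 1) by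
      push_cast; ring]
  rw [show ((n : ℝ) - (k : ℝ)) * (u - (k : ℝ))
        = (((n : ℝ) - ((k + 1 : ℕ) : ℝ)) * (u - ((k + 1 : ℕ) : ℝ)) + (u - ((k + 1 : ℕ) : ℝ)))
          + ((n : ℝ) - (k : ℝ)) by push_cast; ring]
  rw [show (((n + 1 : ℕ) : ℝ) - ((k + 1 : ℕ) : ℝ)) * (u - ((k + 1 : ℕ) : ℝ))
        = ((n : ℝ) - ((k + 1 : ℕ) : ℝ)) * (u - ((k + 1 : ℕ) : ℝ)) + (u - ((k + 1 : ℕ) : ℝ)) by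
      push_cast; ring]
  simp only [Real.rpow_add hp, Real.rpow_add hq]
  ring

end Helpers

/-- The (p,q)-deformed Vandermonde formula. -/
theorem pq_vandermonde (p q : ℝ) (hp : 0 < p) (hq : 0 < q) (hpq : p ≠ q)
    (n : ℕ) (u v : ℝ) :
    pqFacOrd p q (u + v) n =
      ∑ κ ∈ Finset.range (n + 1),
        pqBinom p q n κ * p ^ ((κ : ℝ) * (v - (n : ℝ) + (κ : ℝ)))
          * q ^ (((n : ℝ) - (κ : ℝ)) * (u - (κ : ℝ)))
          * pqFacOrd p q u κ * pqFacOrd p q v (n - κ) := by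
  induction n with
  | zero =>
    norm_num [pqFacOrd, pqBinom, pqFac]
  | succ n ih =>
    show pqFacOrd p q (u + v) (n + 1) = ∑ κ ∈ Finset.range (n + 1 + 1), pqT p q u v (n + 1) κ
    have ih' : pqFacOrd p q (u + v) n = ∑ κ ∈ Finset.range (n + 1), pqT p q u v n κ := ih
    set A : ℕ → ℝ := fun κ =>
      pqT p q u v n κ * (p ^ (v - ((n : ℝ) - (κ : ℝ))) * pqNum p q (u - (κ : ℝ))) with hA
    set B : ℕ → ℝ := fun κ =>
      pqT p q u v n κ * (q ^ (u - (κ : ℝ)) * pqNum p q (v - ((n : ℝ) - (κ : ℝ)))) with hB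
    set g : ℕ → ℝ := fun κ => pqT p q u v (n + 1) κ with hg
    have hsplit : ∀ κ ∈ Finset.range (n + 1),
        pqT p q u v n κ * pqNum p q (u + v - (n : ℝ)) = A κ + B κ := by
      intro κ _
      rw [hA, hB]
      dsimp only
      rw [show u + v - (n : ℝ) = (u - (κ : ℝ)) + (v - ((n : ℝ) - (κ : ℝ))) by ring,
        pqNum_add hp hq hpq, mul_add]
    calc pqFacOrd p q (u + v) (n + 1)
        = (∑ κ ∈ Finset.range (n + 1), pqT p q u v n κ) * pqNum p q (u + v - (n : ℝ)) := by
          rw [pqFacOrd_succ, ih']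
      _ = ∑ κ ∈ Finset.range (n + 1), (A κ + B κ) := by
          rw [Finset.sum_mul]; exact Finset.sum_congr rfl hsplit
      _ = (∑ i ∈ Finset.range n, A i + A n) + (∑ i ∈ Finset.range n, B (i + 1) + B 0) := by
          rw [← Finset.sum_range_succ, ← Finset.sum_range_succ', Finset.sum_add_distrib]
      _ = (∑ i ∈ Finset.range n, g (i + 1) + g 0) + g (n + 1) := by
          have h1 : ∑ i ∈ Finset.range n, A i + ∑ i ∈ Finset.range n, B (i + 1)
              = ∑ i ∈ Finset.range n, g (i + 1) := by
            rw [← Finset.sum_add_distrib]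
            refine Finset.sum_congr rfl fun i hi => ?_
            exact pqHeart hp hq hpq u v (Finset.mem_range.mp hi)
          have h2 : A n = g (n + 1) := pqEdgeTop hp hq hpq u v n
          have h3 : B 0 = g 0 := pqEdge0 hp hq hpq u v n
          linarith [h1, h2, h3]
      _ = ∑ κ ∈ Finset.range (n + 1 + 1), g κ := by
          rw [Finset.sum_range_succ, Finset.sum_range_succ']
end

section
/- Let p and q be real numbers with p > 0, q > 0 and pq ≠ 1, let n be a natural number, and let u, v be real numbers. Then the generalized q-Quesne Vandermonde formula holds: [u+v]^Q_{n,p,q} = Σ_{κ=0}^{n} C^Q_{p,q}(n,κ) · p^{κ(v−n+κ)} · q^{−(n−κ)(u−κ)} · [u]^Q_{κ,p,q} · [v]^Q_{n−κ,p,q}, and likewise [u+v]^Q_{n,p,q} = Σ_{κ=0}^{n} C^Q_{p,q}(n,κ) · p^{(n−κ)(u−κ)} · q^{−κ(v−n+κ)} · [u]^Q_{κ,p,q} · [v]^Q_{n−κ,p,q}. -/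
/-- The generalized q-Quesne deformed number `[x]^Q_{p,q} = (p^x - q^{-x})/(q - p⁻¹)`. -/
noncomputable def quesneNum (p q x : ℝ) : ℝ := (p ^ x - q ^ (-x)) / (q - p⁻¹)

/-- The Quesne factorial `[n]^Q_{p,q}! = ∏_{i=1}^n [i]^Q_{p,q}`. -/
noncomputable def quesneFac (p q : ℝ) (n : ℕ) : ℝ :=
  ∏ i ∈ Finset.range n, quesneNum p q ((i : ℝ) + 1)

/-- The j-th order Quesne factorial `[x]^Q_{j,p,q} = ∏_{v=0}^{j-1} [x-v]^Q_{p,q}`. -/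
noncomputable def quesneFacOrd (p q x : ℝ) (j : ℕ) : ℝ :=
  ∏ v ∈ Finset.range j, quesneNum p q (x - (v : ℝ))

/-- The Quesne binomial coefficient `C^Q_{p,q}(n,κ)`. -/
noncomputable def quesneBinom (p q : ℝ) (n k : ℕ) : ℝ :=
  quesneFac p q n / (quesneFac p q k * quesneFac p q (n - k))

/-!
Everything rests on the addition rule `[x + y] = p^y [x] + q^{-x} [y]`. Splitting
`[u + v - n] = [(u - κ) + (v - n + κ)]` this way distributes the new factor of
`[u + v]_{n+1} = [u + v]_n [u + v - n]` over the two neighbouring terms `κ + 1` and `κ` of the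
sum; splitting `[n + 1] = [(n - k) + (k + 1)]` gives the matching Pascal rule for the Quesne
binomials, so the first formula follows by induction on `n`. The second is the first one for
the parameters `(q⁻¹, p⁻¹)`, under which `[x]` is invariant.
-/

namespace Quesne

variable {p q : ℝ}

theorem quesneNum_add (hp : 0 < p) (hq : 0 < q) (x y : ℝ) :
    quesneNum p q (x + y) = p ^ y * quesneNum p q x + q ^ (-x) * quesneNum p q y := by
  simp only [quesneNum, Real.rpow_add hp, neg_add, Real.rpow_add hq]
  ring

theorem quesneNum_ne_zero (hp : 0 < p) (hq : 0 < q) (hpq : p * q ≠ 1) {x : ℝ} (hx : x ≠ 0) :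
    quesneNum p q x ≠ 0 := by
  have hpq_pos : 0 < p * q := mul_pos hp hq
  refine div_ne_zero (fun h => hpq ?_) (fun h => hpq ?_)
  · have hpow : (p * q) ^ x = 1 := by
      rw [Real.mul_rpow hp.le hq.le, sub_eq_zero.mp h, ← Real.rpow_add hq, neg_add_cancel,
        Real.rpow_zero]
    rw [Real.rpow_def_of_pos hpq_pos, Real.exp_eq_one_iff, mul_eq_zero] at hpow
    exact Real.eq_one_of_pos_of_log_eq_zero hpq_pos (hpow.resolve_right hx)
  · rw [sub_eq_zero.mp h, mul_inv_cancel₀ hp.ne']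

theorem quesneFac_ne_zero (hp : 0 < p) (hq : 0 < q) (hpq : p * q ≠ 1) (n : ℕ) :
    quesneFac p q n ≠ 0 :=
  Finset.prod_ne_zero_iff.2 fun _ _ => quesneNum_ne_zero hp hq hpq (by positivity)

@[simp]
theorem quesneFac_zero : quesneFac p q 0 = 1 :=
  Finset.prod_range_zero _

theorem quesneFac_succ (n : ℕ) :
    quesneFac p q (n + 1) = quesneFac p q n * quesneNum p q ((n : ℝ) + 1) :=
  Finset.prod_range_succ _ n

theorem quesneFacOrd_succ (x : ℝ) (j : ℕ) :
    quesneFacOrd p q x (j + 1) = quesneFacOrd p q x j * quesneNum p q (x - (j : ℝ)) :=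
  Finset.prod_range_succ _ j

theorem quesneBinom_zero_right (hp : 0 < p) (hq : 0 < q) (hpq : p * q ≠ 1) (n : ℕ) :
    quesneBinom p q n 0 = 1 := by
  simp [quesneBinom, quesneFac_ne_zero hp hq hpq]

theorem quesneBinom_self (hp : 0 < p) (hq : 0 < q) (hpq : p * q ≠ 1) (n : ℕ) :
    quesneBinom p q n n = 1 := by
  simp [quesneBinom, quesneFac_ne_zero hp hq hpq]

theorem quesneBinom_succ_succ (hp : 0 < p) (hq : 0 < q) (hpq : p * q ≠ 1) {n k : ℕ}
    (hk : k < n) :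
    quesneBinom p q (n + 1) (k + 1) =
      p ^ ((k : ℝ) + 1) * quesneBinom p q n (k + 1)
        + q ^ (-((n : ℝ) - k)) * quesneBinom p q n k := by
  obtain ⟨m, rfl⟩ := Nat.exists_eq_add_of_lt hk
  have hnum : quesneNum p q ((↑(k + m + 1) : ℝ) + 1) =
      p ^ ((k : ℝ) + 1) * quesneNum p q ((m : ℝ) + 1)
        + q ^ (-((m : ℝ) + 1)) * quesneNum p q ((k : ℝ) + 1) := by
    rw [← quesneNum_add hp hq]
    push_cast
    ring_nf
  have hexp : -((↑(k + m + 1) : ℝ) - k) = -((m : ℝ) + 1) := by push_cast; ring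
  have hk0 := quesneNum_ne_zero hp hq hpq (x := (k : ℝ) + 1) (by positivity)
  have hm0 := quesneNum_ne_zero hp hq hpq (x := (m : ℝ) + 1) (by positivity)
  have := quesneFac_ne_zero hp hq hpq
  simp only [quesneBinom, show k + m + 1 + 1 - (k + 1) = m + 1 by omega,
    show k + m + 1 - (k + 1) = m by omega, show k + m + 1 - k = m + 1 by omega,
    quesneFac_succ, hnum, hexp]
  field_simp

noncomputable def vandermondeTerm (p q : ℝ) (n : ℕ) (u v : ℝ) (κ : ℕ) : ℝ :=
  p ^ ((κ : ℝ) * (v - n + κ)) * q ^ (-((n - κ : ℝ) * (u - κ)))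
    * quesneFacOrd p q u κ * quesneFacOrd p q v (n - κ)

theorem vandermondeTerm_mul_quesneNum (hp : 0 < p) (hq : 0 < q) {n κ : ℕ} (hκ : κ ≤ n)
    (u v : ℝ) :
    vandermondeTerm p q n u v κ * quesneNum p q (u + v - n) =
      q ^ (-((n : ℝ) - κ)) * vandermondeTerm p q (n + 1) u v (κ + 1)
        + p ^ (κ : ℝ) * vandermondeTerm p q (n + 1) u v κ := by
  have hsplit : quesneNum p q (u + v - n) =
      p ^ (v - n + κ) * quesneNum p q (u - κ) + q ^ (-(u - κ)) * quesneNum p q (v - n + κ) := by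
    rw [← quesneNum_add hp hq]
    ring_nf
  have hv : quesneFacOrd p q v (n + 1 - κ) =
      quesneFacOrd p q v (n - κ) * quesneNum p q (v - n + κ) := by
    rw [Nat.sub_add_comm hκ, quesneFacOrd_succ, Nat.cast_sub hκ, sub_sub_eq_add_sub,
      add_sub_right_comm]
  -- Writing each power as `exp (log base * exponent)` reduces these to identities of exponents.
  have hweight_u :
      p ^ ((κ : ℝ) * (v - n + κ)) * q ^ (-((n - κ : ℝ) * (u - κ))) * p ^ (v - n + κ) =
      q ^ (-((n : ℝ) - κ)) * (p ^ (((κ + 1 : ℕ) : ℝ) * (v - (n + 1 : ℕ) + (κ + 1 : ℕ)))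
        * q ^ (-(((n + 1 : ℕ) - (κ + 1 : ℕ) : ℝ) * (u - (κ + 1 : ℕ))))) := by
    simp only [Real.rpow_def_of_pos hp, Real.rpow_def_of_pos hq, ← Real.exp_add]
    push_cast
    ring_nf
  have hweight_v :
      p ^ ((κ : ℝ) * (v - n + κ)) * q ^ (-((n - κ : ℝ) * (u - κ))) * q ^ (-(u - κ)) =
      p ^ (κ : ℝ) * (p ^ ((κ : ℝ) * (v - (n + 1 : ℕ) + κ))
        * q ^ (-(((n + 1 : ℕ) - κ : ℝ) * (u - κ)))) := by
    simp only [Real.rpow_def_of_pos hp, Real.rpow_def_of_pos hq, ← Real.exp_add]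
    push_cast
    ring_nf
  simp only [vandermondeTerm, hsplit, hv, Nat.add_sub_add_right, quesneFacOrd_succ]
  set U := quesneFacOrd p q u κ
  set V := quesneFacOrd p q v (n - κ)
  linear_combination (U * V * quesneNum p q (u - κ)) * hweight_u
    + (U * V * quesneNum p q (v - n + κ)) * hweight_v

theorem quesneFacOrd_add_eq_sum (hp : 0 < p) (hq : 0 < q) (hpq : p * q ≠ 1) (n : ℕ)
    (u v : ℝ) :
    quesneFacOrd p q (u + v) n =
      ∑ κ ∈ Finset.range (n + 1), quesneBinom p q n κ * vandermondeTerm p q n u v κ := by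
  induction n with
  | zero => simp [quesneFacOrd, vandermondeTerm, quesneBinom_zero_right hp hq hpq]
  | succ n ih =>
    set B := quesneBinom p q
    set T := vandermondeTerm p q (n + 1) u v
    have hB_zero : ∀ m, B m 0 = 1 := quesneBinom_zero_right hp hq hpq
    have hB_self : ∀ m, B m m = 1 := quesneBinom_self hp hq hpq
    have hB_succ : ∀ κ < n, B (n + 1) (κ + 1) =
        p ^ ((κ : ℝ) + 1) * B n (κ + 1) + q ^ (-((n : ℝ) - κ)) * B n κ :=
      fun _ => quesneBinom_succ_succ hp hq hpq
    calc quesneFacOrd p q (u + v) (n + 1)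
        = ∑ κ ∈ Finset.range (n + 1),
            (B n κ * q ^ (-((n : ℝ) - κ)) * T (κ + 1) + B n κ * p ^ (κ : ℝ) * T κ) := by
          rw [quesneFacOrd_succ, ih, Finset.sum_mul]
          refine Finset.sum_congr rfl fun κ hκ => ?_
          rw [mul_assoc, vandermondeTerm_mul_quesneNum hp hq (Finset.mem_range_succ_iff.mp hκ)]
          ring
      _ = ∑ κ ∈ Finset.range n,
            (B n κ * q ^ (-((n : ℝ) - κ)) + B n (κ + 1) * p ^ ((κ : ℝ) + 1)) * T (κ + 1)
            + B n n * T (n + 1) + B n 0 * T 0 := by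
          rw [Finset.sum_add_distrib, Finset.sum_range_succ,
            Finset.sum_range_succ' (fun κ => B n κ * _ * T κ)]
          simp only [sub_self, neg_zero, Real.rpow_zero, Nat.cast_zero, mul_one, Nat.cast_succ,
            add_mul, Finset.sum_add_distrib]
          ring
      _ = ∑ κ ∈ Finset.range (n + 2), B (n + 1) κ * T κ := by
          rw [Finset.sum_range_succ, Finset.sum_range_succ', hB_self, hB_self, hB_zero, hB_zero,
            add_right_comm]
          congr 2
          refine Finset.sum_congr rfl fun κ hκ => ?_
          rw [hB_succ κ (Finset.mem_range.mp hκ)]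
          ring

theorem quesneNum_inv_swap (hp : 0 < p) (hq : 0 < q) (x : ℝ) :
    quesneNum q⁻¹ p⁻¹ x = quesneNum p q x := by
  rw [quesneNum, quesneNum, Real.inv_rpow hq.le, ← Real.rpow_neg hq.le, Real.inv_rpow hp.le,
    ← Real.rpow_neg hp.le, neg_neg, inv_inv, ← neg_div_neg_eq, neg_sub, neg_sub]

theorem quesneFacOrd_inv_swap (hp : 0 < p) (hq : 0 < q) (x : ℝ) (j : ℕ) :
    quesneFacOrd q⁻¹ p⁻¹ x j = quesneFacOrd p q x j := by
  simp only [quesneFacOrd, quesneNum_inv_swap hp hq]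

theorem quesneBinom_inv_swap (hp : 0 < p) (hq : 0 < q) (n k : ℕ) :
    quesneBinom q⁻¹ p⁻¹ n k = quesneBinom p q n k := by
  simp only [quesneBinom, quesneFac, quesneNum_inv_swap hp hq]

end Quesne

open Quesne in
/-- The generalized q-Quesne Vandermonde formulas. -/
theorem quesne_vandermonde (p q : ℝ) (hp : 0 < p) (hq : 0 < q) (hpq : p * q ≠ 1)
    (n : ℕ) (u v : ℝ) :
    (quesneFacOrd p q (u + v) n =
      ∑ κ ∈ Finset.range (n + 1),
        quesneBinom p q n κ * p ^ ((κ : ℝ) * (v - (n : ℝ) + (κ : ℝ)))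
          * q ^ (-(((n : ℝ) - (κ : ℝ)) * (u - (κ : ℝ))))
          * quesneFacOrd p q u κ * quesneFacOrd p q v (n - κ)) ∧
    (quesneFacOrd p q (u + v) n =
      ∑ κ ∈ Finset.range (n + 1),
        quesneBinom p q n κ * p ^ (((n : ℝ) - (κ : ℝ)) * (u - (κ : ℝ)))
          * q ^ (-((κ : ℝ) * (v - (n : ℝ) + (κ : ℝ))))
          * quesneFacOrd p q u κ * quesneFacOrd p q v (n - κ)) := by
  have hpq_inv : q⁻¹ * p⁻¹ ≠ 1 := by rwa [← mul_inv, mul_comm, Ne, inv_eq_one]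
  constructor
  · rw [quesneFacOrd_add_eq_sum hp hq hpq]
    simp only [vandermondeTerm, mul_assoc]
  · rw [← quesneFacOrd_inv_swap hp hq,
      quesneFacOrd_add_eq_sum (inv_pos.2 hq) (inv_pos.2 hp) hpq_inv]
    refine Finset.sum_congr rfl fun κ _ => ?_
    rw [vandermondeTerm, quesneBinom_inv_swap hp hq, quesneFacOrd_inv_swap hp hq,
      quesneFacOrd_inv_swap hp hq, Real.inv_rpow hq.le, ← Real.rpow_neg hq.le,
      Real.inv_rpow hp.le, ← Real.rpow_neg hp.le, neg_neg]
    ring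
end

section
/- Let p and q be real numbers with p > 0, q > 0 and p ≠ q, and let n, κ be natural numbers. Then the κ-th order (p,q)-factorial of −n satisfies [−n]_{κ,p,q} = (−1)^κ · (pq)^{−nκ−κ(κ−1)/2} · [n+κ−1]_{κ,p,q}. -/
/-!
Each factor of `[-n]_{κ,p,q}` is a deformed number at a negative argument, and
`[-x]_{p,q} = -(pq)^{-x} [x]_{p,q}` because `p^{-x} - q^{-x} = -(p^x - q^x) / (pq)^x`.
Hence `[-n]_{κ,p,q} = (-1)^κ (pq)^{-∑_{v<κ}(n+v)} ∏_{v<κ} [n+v]_{p,q}`; the exponent is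
`-nκ - κ(κ-1)/2`, and reading the product backwards gives `[n+κ-1]_{κ,p,q}`.
-/

open Finset

lemma sum_range_natCast_real (κ : ℕ) : ∑ v ∈ range κ, (v : ℝ) = κ * (κ - 1) / 2 := by
  induction κ with
  | zero => simp
  | succ k ih => rw [sum_range_succ, ih]; push_cast; ring

namespace pqNum

variable {p q : ℝ}

lemma neg (hp : 0 < p) (hq : 0 < q) (x : ℝ) :
    pqNum p q (-x) = -(p * q) ^ (-x) * pqNum p q x := by
  have hpx : p ^ x ≠ 0 := (Real.rpow_pos_of_pos hp x).ne'
  have hqx : q ^ x ≠ 0 := (Real.rpow_pos_of_pos hq x).ne'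
  unfold pqNum
  rw [Real.rpow_neg hp.le, Real.rpow_neg hq.le, Real.rpow_neg (mul_pos hp hq).le,
    Real.mul_rpow hp.le hq.le]
  field_simp
  ring

end pqNum

namespace pqFacOrd

variable {p q : ℝ}

lemma add_natCast_sub_one (x : ℝ) (κ : ℕ) :
    pqFacOrd p q (x + κ - 1) κ = ∏ v ∈ range κ, pqNum p q (x + v) := by
  rw [← prod_range_reflect]
  refine prod_congr rfl fun v hv => ?_
  have hv : v + 1 ≤ κ := mem_range.mp hv
  rw [Nat.sub_sub, add_comm 1, Nat.cast_sub hv]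
  push_cast
  ring_nf

lemma neg (hp : 0 < p) (hq : 0 < q) (x : ℝ) (κ : ℕ) :
    pqFacOrd p q (-x) κ =
      (-1) ^ κ * (p * q) ^ (-(x * κ) - κ * (κ - 1) / 2) * pqFacOrd p q (x + κ - 1) κ := by
  have hexp : ∑ v ∈ range κ, -(x + v) = -(x * κ) - κ * (κ - 1) / 2 := by
    rw [sum_neg_distrib, sum_add_distrib, sum_const, card_range, sum_range_natCast_real,
      nsmul_eq_mul]
    ring
  calc pqFacOrd p q (-x) κ
      = ∏ v ∈ range κ, (-1) * (p * q) ^ (-(x + v)) * pqNum p q (x + v) := by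
        refine prod_congr rfl fun v _ => ?_
        rw [← neg_add', pqNum.neg hp hq]
        ring
    _ = (-1) ^ κ * (p * q) ^ (-(x * κ) - κ * (κ - 1) / 2) * pqFacOrd p q (x + κ - 1) κ := by
        rw [prod_mul_distrib, prod_mul_distrib, prod_const, card_range,
          ← Real.rpow_sum_of_pos (mul_pos hp hq), hexp, add_natCast_sub_one]

end pqFacOrd

theorem pqFacOrd_neg_general (p q : ℝ) (hp : 0 < p) (hq : 0 < q) (n κ : ℕ) :
    pqFacOrd p q (-(n : ℝ)) κ =
      (-1 : ℝ) ^ κ * (p * q) ^ (-((n : ℝ) * (κ : ℝ)) - (κ : ℝ) * ((κ : ℝ) - 1) / 2)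
        * pqFacOrd p q ((n : ℝ) + (κ : ℝ) - 1) κ :=
  pqFacOrd.neg hp hq n κ

/-- `[-n]_{κ,p,q} = (-1)^κ (pq)^{-nκ-κ(κ-1)/2} [n+κ-1]_{κ,p,q}`. -/
theorem pqFacOrd_neg (p q : ℝ) (hp : 0 < p) (hq : 0 < q) (hpq : p ≠ q) (n κ : ℕ) :
    pqFacOrd p q (-(n : ℝ)) κ =
      (-1 : ℝ) ^ κ * (p * q) ^ (-((n : ℝ) * (κ : ℝ)) - (κ : ℝ) * ((κ : ℝ) - 1) / 2)
        * pqFacOrd p q ((n : ℝ) + (κ : ℝ) - 1) κ :=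
  pqFacOrd_neg_general p q hp hq n κ
end

section
/- Let q be a real number with q > 0 and q ≠ 1, let n be a natural number, and let x, y, v be real numbers. Then Σ_{κ=0}^{n} C_q(n,κ) · x^κ · Π_{i=1}^{n−κ}(y − v·q^{i−1}) = Σ_{κ=0}^{n} C_q(n,κ) · y^κ · Π_{i=1}^{n−κ}(x − v·q^{i−1}). -/
/-- The q-deformed number `[n]_q = (1 - q^n)/(1 - q)`. -/
noncomputable def qNum (q : ℝ) (n : ℕ) : ℝ := (1 - q ^ n) / (1 - q)

/-- The q-factorial `[n]_q! = ∏_{i=1}^n [i]_q`. -/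
noncomputable def qFac (q : ℝ) (n : ℕ) : ℝ := ∏ i ∈ Finset.range n, qNum q (i + 1)

/-- The q-binomial coefficient `C_q(n,κ)`. -/
noncomputable def qBinom (q : ℝ) (n k : ℕ) : ℝ := qFac q n / (qFac q k * qFac q (n - k))

lemma qNum_ne_zero {q : ℝ} (hq : 0 < q) (hq1 : q ≠ 1) {m : ℕ} (hm : m ≠ 0) : qNum q m ≠ 0 := by
  have h2 : (1:ℝ) - q ≠ 0 := sub_ne_zero.mpr (Ne.symm hq1)
  have h1 : q ^ m ≠ 1 := by
    rcases lt_or_gt_of_ne hq1 with h | h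
    · exact ne_of_lt (pow_lt_one₀ hq.le h hm)
    · exact ne_of_gt (one_lt_pow₀ h hm)
  exact div_ne_zero (sub_ne_zero.mpr (Ne.symm h1)) h2

lemma qFac_ne_zero {q : ℝ} (hq : 0 < q) (hq1 : q ≠ 1) (n : ℕ) : qFac q n ≠ 0 := by
  unfold qFac
  exact Finset.prod_ne_zero_iff.mpr fun i _ => qNum_ne_zero hq hq1 (Nat.succ_ne_zero i)

lemma qNum_add {q : ℝ} (hq1 : q ≠ 1) (a b : ℕ) :
    qNum q (a + b) = qNum q a + q ^ a * qNum q b := by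
  have h2 : (1:ℝ) - q ≠ 0 := sub_ne_zero.mpr (Ne.symm hq1)
  unfold qNum
  field_simp
  ring_nf

lemma qFac_succ (q : ℝ) (n : ℕ) : qFac q (n + 1) = qFac q n * qNum q (n + 1) :=
  Finset.prod_range_succ _ _

noncomputable def qB (q : ℝ) (m j : ℕ) : ℝ := if j ≤ m then qBinom q m j else 0

lemma qFac_zero (q : ℝ) : qFac q 0 = 1 := rfl

lemma qB_zero {q : ℝ} (hq : 0 < q) (hq1 : q ≠ 1) (m : ℕ) : qB q m 0 = 1 := by
  simp [qB, qBinom, qFac_zero, div_self (qFac_ne_zero hq hq1 m)]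

lemma qB_self {q : ℝ} (hq : 0 < q) (hq1 : q ≠ 1) (m : ℕ) : qB q m m = 1 := by
  simp [qB, qBinom, qFac_zero, div_self (qFac_ne_zero hq hq1 m)]

lemma qBinom_pascal_core {q : ℝ} (hq : 0 < q) (hq1 : q ≠ 1) (a b : ℕ) :
    qBinom q (a+b+2) (b+1) = qBinom q (a+b+1) (b+1) + q^(a+1) * qBinom q (a+b+1) b := by
  have s1 : a + b + 2 - (b + 1) = a + 1 := by omega
  have s2 : a + b + 1 - (b + 1) = a := by omega
  have s3 : a + b + 1 - b = a + 1 := by omega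
  unfold qBinom
  rw [s1, s2, s3]
  have key : qNum q (a + b + 1 + 1) = qNum q (a + 1) + q ^ (a+1) * qNum q (b + 1) := by
    have := qNum_add hq1 (a+1) (b+1)
    rwa [show a + 1 + (b + 1) = a + b + 1 + 1 by omega] at this
  rw [show a+b+2 = a+b+1+1 by omega, qFac_succ q (a+b+1), qFac_succ q a, qFac_succ q b, key]
  have h1 := qFac_ne_zero hq hq1 a
  have h2 := qFac_ne_zero hq hq1 b
  have h3 := qFac_ne_zero hq hq1 (a+b+1)
  have h4 := qNum_ne_zero hq hq1 (Nat.succ_ne_zero a)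
  have h5 := qNum_ne_zero hq hq1 (Nat.succ_ne_zero b)
  field_simp

lemma qB_pascal {q : ℝ} (hq : 0 < q) (hq1 : q ≠ 1) {m j : ℕ} (hj : j ≤ m + 1) :
    qB q (m+1) j = qB q m j + (if j = 0 then 0 else q^(m+1-j) * qB q m (j-1)) := by
  match j with
  | 0 => simp [qB_zero hq hq1]
  | j+1 =>
    simp only [Nat.succ_ne_zero, if_neg, Nat.add_sub_cancel]
    rcases Nat.lt_or_ge (j+1) (m+1) with h | h
    · obtain ⟨a, rfl⟩ : ∃ a, m = a + j + 1 := ⟨m - j - 1, by omega⟩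
      have hcore := qBinom_pascal_core hq hq1 a j
      simp only [qB, if_pos (show j+1 ≤ a+j+1+1 by omega), if_pos (show j+1 ≤ a+j+1 by omega),
        if_pos (show j ≤ a+j+1 by omega)]
      rw [show a+j+1+1 = a+j+2 by omega, show a+j+1+1-(j+1) = a+1 by omega]
      exact hcore
    · have hjm : j = m := by omega
      subst hjm
      rw [show j+1 = j+1 from rfl]
      have h0 : qB q j (j+1) = 0 := by simp [qB]
      rw [qB_self hq hq1, h0, show j+1-(j+1) = 0 by omega, qB_self hq hq1]
      simp

lemma prod_expand {q : ℝ} (hq : 0 < q) (hq1 : q ≠ 1) (v y : ℝ) (m : ℕ) :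
    ∏ i ∈ Finset.range m, (y - v * q ^ i)
      = ∑ j ∈ Finset.range (m+1), qB q m j * q ^ (j.choose 2) * (-v)^j * y^(m - j) := by
  induction m with
  | zero => simp [qB_zero hq hq1]
  | succ m ih =>
    rw [Finset.prod_range_succ, ih]
    have step : ∀ j ∈ Finset.range (m+2), qB q (m+1) j * q ^ (j.choose 2) * (-v)^j * y^(m+1-j)
        = qB q m j * q ^ (j.choose 2) * (-v)^j * y^(m+1-j)
          + (if j = 0 then 0 else q^(m+1-j) * qB q m (j-1) * q ^ (j.choose 2) * (-v)^j * y^(m+1-j)) := by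
      intro j hj
      rw [qB_pascal hq hq1 (by have := Finset.mem_range.mp hj; omega)]
      rcases eq_or_ne j 0 with rfl | hne
      · simp
      · simp only [if_neg hne]; ring
    rw [Finset.sum_congr rfl step, Finset.sum_add_distrib]
    have h0 : qB q m (m+1) = 0 := by simp [qB]
    have A : ∑ j ∈ Finset.range (m+2), qB q m j * q ^ (j.choose 2) * (-v)^j * y^(m+1-j)
        = ∑ j ∈ Finset.range (m+1), qB q m j * q ^ (j.choose 2) * (-v)^j * y^(m-j) * y := by
      rw [Finset.sum_range_succ, h0]
      simp only [zero_mul, add_zero]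
      refine Finset.sum_congr rfl fun j hj => ?_
      rw [show m + 1 - j = (m - j) + 1 by have := Finset.mem_range.mp hj; omega, pow_succ]
      ring
    have B : ∑ j ∈ Finset.range (m+2),
          (if j = 0 then 0 else q^(m+1-j) * qB q m (j-1) * q ^ (j.choose 2) * (-v)^j * y^(m+1-j))
        = ∑ j ∈ Finset.range (m+1),
            qB q m j * q ^ (j.choose 2) * (-v)^j * y^(m-j) * (-(v * q^m)) := by
      rw [Finset.sum_range_succ']
      rw [if_pos rfl, add_zero]
      refine Finset.sum_congr rfl fun j hj => ?_
      rw [if_neg (Nat.succ_ne_zero j)]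
      obtain ⟨d, rfl⟩ : ∃ d, m = d + j := ⟨m - j, by have := Finset.mem_range.mp hj; omega⟩
      have hc : (j+1).choose 2 = j.choose 2 + j := by
        simp [Nat.choose_succ_succ, Nat.choose_one_right, Nat.add_comm]
      rw [show d + j + 1 - (j + 1) = d by omega, show j + 1 - 1 = j by omega, hc,
        show d + j - j = d by omega, pow_add q (j.choose 2) j, pow_add q d j, pow_succ]
      ring
    rw [A, B, ← Finset.sum_add_distrib, Finset.sum_mul]
    refine Finset.sum_congr rfl fun j hj => ?_
    ring

lemma coeff_symm {q : ℝ} (hq : 0 < q) (hq1 : q ≠ 1) {n k j : ℕ} (h : k + j ≤ n) :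
    qBinom q n k * qBinom q (n-k) j = qBinom q n (n-k-j) * qBinom q (k+j) j := by
  obtain ⟨a, rfl⟩ : ∃ a, n = k + j + a := ⟨n - k - j, by omega⟩
  unfold qBinom
  rw [show k+j+a-k = j+a by omega, show j+a-j = a by omega,
    show k+j+a-a = k+j by omega, show k+j-j = k by omega]
  field_simp [qFac_ne_zero hq hq1]


/-- Symmetry lemma underlying the q-binomial distribution. -/
theorem q_binomial_symmetry (q : ℝ) (hq : 0 < q) (hq1 : q ≠ 1) (n : ℕ) (x y v : ℝ) :
    ∑ κ ∈ Finset.range (n + 1),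
        qBinom q n κ * x ^ κ * ∏ i ∈ Finset.range (n - κ), (y - v * q ^ i) =
      ∑ κ ∈ Finset.range (n + 1),
        qBinom q n κ * y ^ κ * ∏ i ∈ Finset.range (n - κ), (x - v * q ^ i) := by
  have expand : ∀ (a b : ℝ),
      ∑ κ ∈ Finset.range (n + 1), qBinom q n κ * a ^ κ * ∏ i ∈ Finset.range (n - κ), (b - v * q ^ i)
      = ∑ p ∈ (Finset.range (n+1)).sigma (fun k => Finset.range (n - k + 1)),
          qB q n p.1 * qB q (n - p.1) p.2 * q ^ (p.2.choose 2) * (-v) ^ p.2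
            * a ^ p.1 * b ^ (n - p.1 - p.2) := by
    intro a b
    rw [Finset.sum_sigma]
    refine Finset.sum_congr rfl fun k hk => ?_
    rw [prod_expand hq hq1 v b (n - k), Finset.mul_sum]
    refine Finset.sum_congr rfl fun j hj => ?_
    have hk' : k ≤ n := by have := Finset.mem_range.mp hk; omega
    rw [show qBinom q n k = qB q n k from (if_pos hk').symm]
    ring
  rw [expand x y, expand y x]
  refine Finset.sum_nbij' (i := fun p => ⟨n - p.1 - p.2, p.2⟩)
    (j := fun p => ⟨n - p.1 - p.2, p.2⟩) ?_ ?_ ?_ ?_ ?_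
  · rintro ⟨k, j⟩ hp
    rw [Finset.mem_sigma] at hp
    have h1 := Finset.mem_range.mp hp.1
    have h2 := Finset.mem_range.mp hp.2
    simp only at h1 h2
    rw [Finset.mem_sigma]
    dsimp only
    exact ⟨Finset.mem_range.mpr (by omega), Finset.mem_range.mpr (by omega)⟩
  · rintro ⟨k, j⟩ hp
    rw [Finset.mem_sigma] at hp
    have h1 := Finset.mem_range.mp hp.1
    have h2 := Finset.mem_range.mp hp.2
    simp only at h1 h2
    rw [Finset.mem_sigma]
    dsimp only
    exact ⟨Finset.mem_range.mpr (by omega), Finset.mem_range.mpr (by omega)⟩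
  · intro p hp
    rw [Finset.mem_sigma] at hp
    have h1 := Finset.mem_range.mp hp.1
    have h2 := Finset.mem_range.mp hp.2
    obtain ⟨p1, p2⟩ := p
    simp only at h1 h2 ⊢
    congr 1
    omega
  · intro p hp
    rw [Finset.mem_sigma] at hp
    have h1 := Finset.mem_range.mp hp.1
    have h2 := Finset.mem_range.mp hp.2
    obtain ⟨p1, p2⟩ := p
    simp only at h1 h2 ⊢
    congr 1
    omega
  · intro p hp
    rw [Finset.mem_sigma] at hp
    have h1 := Finset.mem_range.mp hp.1
    have h2 := Finset.mem_range.mp hp.2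
    obtain ⟨k, j⟩ := p
    simp only at h1 h2 ⊢
    have hle : k + j ≤ n := by omega
    rw [show n - (n - k - j) = k + j by omega, show k + j - j = k by omega]
    have hcf : qB q n k * qB q (n - k) j = qB q n (n - k - j) * qB q (k + j) j := by
      rw [show qB q n k = qBinom q n k from if_pos (by omega),
        show qB q (n - k) j = qBinom q (n - k) j from if_pos (by omega),
        show qB q n (n - k - j) = qBinom q n (n - k - j) from if_pos (by omega),
        show qB q (k + j) j = qBinom q (k + j) j from if_pos (by omega)]
      exact coeff_symm hq hq1 hle
    calc qB q n k * qB q (n - k) j * q ^ j.choose 2 * (-v) ^ j * x ^ k * y ^ (n - k - j)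
        = (qB q n k * qB q (n - k) j) * (q ^ j.choose 2 * (-v) ^ j * x ^ k * y ^ (n - k - j)) := by ring
      _ = (qB q n (n - k - j) * qB q (k + j) j) * (q ^ j.choose 2 * (-v) ^ j * x ^ k * y ^ (n - k - j)) := by rw [hcf]
      _ = qB q n (n - k - j) * qB q (k + j) j * q ^ j.choose 2 * (-v) ^ j * y ^ (n - k - j) * x ^ k := by ring
end
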